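/- Let p be a prime with p ≥ 7, let k ≥ 4 and d be integers, and for integers m, ε_a, ε_b with 0 ≤ m ≤ r(k−3) − 1 and ε_a, ε_b ∈ {0,1} set D̂(m, ε_a, ε_b) = m(2p³ − 2) + ε_a(2p^{[k+1]} − 1) + ε_b(2p^{[k+2]} − 1) + (2p^{[k]} − 1) − 2d·p^{k−1}. If d ≥ p + 1, then D̂(m, ε_a, ε_b) ≤ −2p³ + 2p² − 1 for all such m, ε_a, ε_b; if d ≤ −1, then D̂(m, ε_a, ε_b) ≥ 2p³ + 2p − 1 for all such m, ε_a, ε_b. -/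

import Mathlib

/-!
Telescoping the recurrence gives `(p³ - 1) r(j) = p^(j+3) - p^[j]`, so for `m ≤ r(k-3) - 1`
the `(tμ)^m` part of the degree is at most `2p^k - 2p^[k] - 2p³ + 2`. There `-2p^[k]` cancels
`|λ_[k]|`, and `2p^k` cancels against `-2(p+1)p^(k-1)` up to `-2p^(k-1) ≤ -2p³`. What is left is
bounded by the contribution of `λ_[k+1] λ_[k+2]`, at most `2p² + 2p³` since `[k+1] ≠ [k+2]`.
For `d ≤ -1` every summand but `|λ_[k]| - 2d p^(k-1) ≥ 2p - 1 + 2p³` is nonnegative.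
-/

theorem r_closed_form (q : ℕ) (r : ℤ → ℕ) (hr0 : r 0 = 0) (hrm1 : r (-1) = 0)
    (hrm2 : r (-2) = 0) (hrec : ∀ k : ℤ, 1 ≤ k → r k = q ^ k.toNat + r (k - 3)) (n : ℕ) :
    ((q : ℤ) ^ 3 - 1) * r (n + 1) = (q : ℤ) ^ (n + 4) - (q : ℤ) ^ (n % 3 + 1) := by
  induction n using Nat.strong_induction_on with
  | _ n ih =>
    rw [hrec _ (by omega), show ((n : ℤ) + 1).toNat = n + 1 by omega]
    rcases Nat.lt_or_ge n 3 with hn | hn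
    · interval_cases n <;> norm_num [hr0, hrm1, hrm2] <;> ring
    · obtain ⟨n, rfl⟩ := Nat.exists_eq_add_of_le' hn
      have h := ih n (by omega)
      rw [show ((n + 3 : ℕ) : ℤ) + 1 - 3 = n + 1 by push_cast; ring, Nat.add_mod_right]
      push_cast
      linear_combination h

theorem pow_add_pow_le_sq_add_cube {q : ℤ} (hq : 1 ≤ q) {a b : ℕ} (hab : a ≠ b)
    (ha : a ≤ 3) (hb : b ≤ 3) : q ^ a + q ^ b ≤ q ^ 2 + q ^ 3 := by
  have h01 : q ^ 0 ≤ q ^ 1 := pow_le_pow_right₀ hq (by norm_num)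
  have h12 : q ^ 1 ≤ q ^ 2 := pow_le_pow_right₀ hq (by norm_num)
  have h23 : q ^ 2 ≤ q ^ 3 := pow_le_pow_right₀ hq (by norm_num)
  interval_cases a <;> interval_cases b <;> omega

/-- Total degree of `(tμ)^m λ_a^εa λ_b^εb t^(d q^e) λ_c` for `|t| = -2`, `|λ_i| = 2q^i - 1`,
`|μ| = 2q³`. -/
def monomialDegree (q : ℤ) (a b c e : ℕ) (m εa εb d : ℤ) : ℤ :=
  m * (2 * q ^ 3 - 2) + εa * (2 * q ^ a - 1) + εb * (2 * q ^ b - 1) + (2 * q ^ c - 1)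
    - 2 * d * q ^ e

theorem monomialDegree_le {q : ℤ} (hq : 1 ≤ q) {a b c e : ℕ} (hab : a ≠ b) (ha : a ≤ 3)
    (hb : b ≤ 3) (he : 3 ≤ e) {R m εa εb d : ℤ} (hR : (q ^ 3 - 1) * R = q ^ (e + 1) - q ^ c)
    (hm : m ≤ R - 1) (hεa : εa ≤ 1) (hεb : εb ≤ 1) (hd : q + 1 ≤ d) :
    monomialDegree q a b c e m εa εb d ≤ -2 * q ^ 3 + 2 * q ^ 2 - 1 := by
  have hqa : 1 ≤ q ^ a := one_le_pow₀ hq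
  have hqb : 1 ≤ q ^ b := one_le_pow₀ hq
  have hq3 : 1 ≤ q ^ 3 := one_le_pow₀ hq
  have hqe : q ^ 3 ≤ q ^ e := pow_le_pow_right₀ hq he
  have hab' := pow_add_pow_le_sq_add_cube hq hab ha hb
  have := mul_le_mul_of_nonneg_right hm (by linarith : 0 ≤ 2 * q ^ 3 - 2)
  have := mul_le_mul_of_nonneg_right hεa (by linarith : 0 ≤ 2 * q ^ a - 1)
  have := mul_le_mul_of_nonneg_right hεb (by linarith : 0 ≤ 2 * q ^ b - 1)
  have := mul_le_mul_of_nonneg_right hd (by positivity : 0 ≤ 2 * q ^ e)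
  unfold monomialDegree
  rw [pow_succ q e] at hR
  linarith

theorem le_monomialDegree {q : ℤ} (hq : 1 ≤ q) {a b c e : ℕ} (hc : 1 ≤ c) (he : 3 ≤ e)
    {m εa εb d : ℤ} (hm : 0 ≤ m) (hεa : 0 ≤ εa) (hεb : 0 ≤ εb) (hd : d ≤ -1) :
    2 * q ^ 3 + 2 * q - 1 ≤ monomialDegree q a b c e m εa εb d := by
  have hqc : q ^ 1 ≤ q ^ c := pow_le_pow_right₀ hq hc
  have hqe : q ^ 3 ≤ q ^ e := pow_le_pow_right₀ hq he
  have : 0 ≤ m * (2 * q ^ 3 - 2) := mul_nonneg hm (by linarith [one_le_pow₀ (n := 3) hq])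
  have : 0 ≤ εa * (2 * q ^ a - 1) := mul_nonneg hεa (by linarith [one_le_pow₀ (n := a) hq])
  have : 0 ≤ εb * (2 * q ^ b - 1) := mul_nonneg hεb (by linarith [one_le_pow₀ (n := b) hq])
  have : 2 * q ^ e ≤ -(2 * d * q ^ e) := by nlinarith [one_le_pow₀ (n := e) hq]
  unfold monomialDegree
  linarith [pow_one q]

theorem Shat_kd_degree_bounds_general (p : ℕ) (hp7 : 7 ≤ p)
    (r : ℤ → ℕ) (hr0 : r 0 = 0) (hrm1 : r (-1) = 0) (hrm2 : r (-2) = 0)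
    (hrec : ∀ k : ℤ, 1 ≤ k → r k = p ^ k.toNat + r (k - 3))
    (br : ℤ → ℤ)
    (hbr : ∀ k : ℤ, 1 ≤ k → (br k = 1 ∨ br k = 2 ∨ br k = 3) ∧ (3 : ℤ) ∣ (k - br k))
    (k : ℤ) (hk : 4 ≤ k) (d : ℤ) :
    ∀ m εa εb : ℤ, 0 ≤ m → m ≤ (r (k - 3) : ℤ) - 1 →
      (εa = 0 ∨ εa = 1) → (εb = 0 ∨ εb = 1) →
    ∀ Dg : ℤ, Dg = m * (2 * (p : ℤ) ^ 3 - 2) + εa * (2 * (p : ℤ) ^ (br (k + 1)).toNat - 1)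
        + εb * (2 * (p : ℤ) ^ (br (k + 2)).toNat - 1) + (2 * (p : ℤ) ^ (br k).toNat - 1)
        - 2 * d * (p : ℤ) ^ (k - 1).toNat →
      (((p : ℤ) + 1 ≤ d → Dg ≤ -2 * (p : ℤ) ^ 3 + 2 * (p : ℤ) ^ 2 - 1) ∧
       (d ≤ -1 → 2 * (p : ℤ) ^ 3 + 2 * (p : ℤ) - 1 ≤ Dg)) := by
  intro m εa εb hm0 hm hεa hεb Dg hDg
  obtain ⟨n, rfl⟩ : ∃ n : ℕ, k = n + 4 := ⟨(k - 4).toNat, by omega⟩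
  have hp : (1 : ℤ) ≤ p := by omega
  have hbk := hbr (n + 4) (by omega)
  have hbk1 := hbr (n + 4 + 1) (by omega)
  have hbk2 := hbr (n + 4 + 2) (by omega)
  have hR := r_closed_form p r hr0 hrm1 hrm2 hrec n
  rw [show (n : ℤ) + 4 - 3 = n + 1 by ring] at hm
  rw [show (n : ℤ) + 4 - 1 = ((n + 3 : ℕ) : ℤ) by push_cast; ring, Int.toNat_natCast] at hDg
  change Dg = monomialDegree p (br (n + 4 + 1)).toNat (br (n + 4 + 2)).toNat (br (n + 4)).toNat
    (n + 3) m εa εb d at hDg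
  subst hDg
  constructor
  · intro hd
    rw [show (br (n + 4)).toNat = n % 3 + 1 by omega]
    exact monomialDegree_le hp (by omega) (by omega) (by omega) (by omega) hR hm (by omega)
      (by omega) hd
  · exact le_monomialDegree hp (by omega) (by omega) hm0 (by omega) (by omega)

/-- Degree bounds for the basis monomials
`(tμ)^m λ_{[k+1]}^{ε_a} λ_{[k+2]}^{ε_b} t^{dp^{k−1}} λ_{[k]}` of `Ŝ(k,d)` for `k ≥ 4`:
for `d ≥ p + 1` all total degrees are `≤ −2p³ + 2p² − 1`, and for `d ≤ −1`
all total degrees are `≥ 2p³ + 2p − 1`. -/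
theorem Shat_kd_degree_bounds (p : ℕ) (hp : p.Prime) (hp7 : 7 ≤ p)
    (r : ℤ → ℕ) (hr0 : r 0 = 0) (hrm1 : r (-1) = 0) (hrm2 : r (-2) = 0)
    (hrec : ∀ k : ℤ, 1 ≤ k → r k = p ^ k.toNat + r (k - 3))
    (br : ℤ → ℤ)
    (hbr : ∀ k : ℤ, 1 ≤ k → (br k = 1 ∨ br k = 2 ∨ br k = 3) ∧ (3 : ℤ) ∣ (k - br k))
    (k : ℤ) (hk : 4 ≤ k) (d : ℤ) :
    ∀ m εa εb : ℤ, 0 ≤ m → m ≤ (r (k - 3) : ℤ) - 1 →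
      (εa = 0 ∨ εa = 1) → (εb = 0 ∨ εb = 1) →
    ∀ Dg : ℤ, Dg = m * (2 * (p : ℤ) ^ 3 - 2) + εa * (2 * (p : ℤ) ^ (br (k + 1)).toNat - 1)
        + εb * (2 * (p : ℤ) ^ (br (k + 2)).toNat - 1) + (2 * (p : ℤ) ^ (br k).toNat - 1)
        - 2 * d * (p : ℤ) ^ (k - 1).toNat →
      (((p : ℤ) + 1 ≤ d → Dg ≤ -2 * (p : ℤ) ^ 3 + 2 * (p : ℤ) ^ 2 - 1) ∧
       (d ≤ -1 → 2 * (p : ℤ) ^ 3 + 2 * (p : ℤ) - 1 ≤ Dg)) :=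
  Shat_kd_degree_bounds_general p hp7 r hr0 hrm1 hrm2 hrec br hbr k hk d
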